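/- The optimal circulant preconditioner exists and is unique: for any n×n complex matrix A, there is a unique circulant matrix C minimizing ‖C − A‖_F over the algebra of n×n circulant matrices, and its first column entries are given by c_k = (1/n) Σ_{i-j ≡ k (mod n)} A_{ij}, averaging the entries of A along each wrapped diagonal. -/

import Mathlib

open Matrix Complex BigOperators

/-- The Frobenius norm of a complex matrix. -/
noncomputable def frobNorm {n : ℕ} [NeZero n] (M : Matrix (ZMod n) (ZMod n) ℂ) : ℝ :=
  Real.sqrt (∑ i : ZMod n, ∑ j : ZMod n, ‖M i j‖ ^ 2)

private lemma sum_sq_mean {n : ℕ} [NeZero n] (a : ZMod n → ℂ) (c m : ℂ)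
    (hm : (n : ℂ) * m = ∑ i, a i) :
    ∑ i : ZMod n, ‖c - a i‖ ^ 2
      = ∑ i : ZMod n, ‖m - a i‖ ^ 2 + n * ‖c - m‖ ^ 2 := by
  have hzero : ∑ i : ZMod n, (m - a i) = 0 := by
    rw [Finset.sum_sub_distrib, Finset.sum_const, ← hm, Finset.card_univ, ZMod.card]
    simp [mul_comm]
  simp only [Complex.sq_norm]
  have hsplit : ∀ i : ZMod n, Complex.normSq (c - a i)
      = Complex.normSq (c - m) + Complex.normSq (m - a i)
        + 2 * ((c - m) * (starRingEnd ℂ) (m - a i)).re := by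
    intro i
    have : c - a i = (c - m) + (m - a i) := by ring
    rw [this, Complex.normSq_add]
  rw [Finset.sum_congr rfl (fun i _ => hsplit i)]
  rw [Finset.sum_add_distrib, Finset.sum_add_distrib, Finset.sum_const, Finset.card_univ,
    ZMod.card]
  have hcross : ∑ i : ZMod n, 2 * ((c - m) * (starRingEnd ℂ) (m - a i)).re = 0 := by
    have h1 : ∑ i : ZMod n, ((c - m) * (starRingEnd ℂ) (m - a i)).re
        = ((c - m) * (starRingEnd ℂ) (∑ i : ZMod n, (m - a i))).re := by
      rw [map_sum, Finset.mul_sum, Complex.re_sum]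
    rw [← Finset.mul_sum, h1, hzero]
    simp
  rw [hcross]
  ring

private lemma sumsq_circ {n : ℕ} [NeZero n] (A : Matrix (ZMod n) (ZMod n) ℂ)
    (d : ZMod n → ℂ) :
    ∑ i : ZMod n, ∑ j : ZMod n, ‖(Matrix.circulant d - A) i j‖ ^ 2
      = ∑ k : ZMod n, ∑ i : ZMod n, ‖d k - A i (i - k)‖ ^ 2 := by
  have h : ∀ i : ZMod n, ∑ j : ZMod n, ‖(Matrix.circulant d - A) i j‖ ^ 2
      = ∑ k : ZMod n, ‖d k - A i (i - k)‖ ^ 2 := by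
    intro i
    rw [← Equiv.sum_comp (Equiv.subLeft i)
      (fun k => ‖d k - A i (i - k)‖ ^ 2)]
    apply Finset.sum_congr rfl
    intro j _
    simp [Matrix.circulant, Matrix.sub_apply, sub_sub_cancel]
  calc ∑ i : ZMod n, ∑ j : ZMod n, ‖(Matrix.circulant d - A) i j‖ ^ 2
      = ∑ i : ZMod n, ∑ k : ZMod n, ‖d k - A i (i - k)‖ ^ 2 :=
        Finset.sum_congr rfl (fun i _ => h i)
    _ = ∑ k : ZMod n, ∑ i : ZMod n, ‖d k - A i (i - k)‖ ^ 2 := Finset.sum_comm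

theorem optimal_circulant_preconditioner {n : ℕ} [NeZero n]
    (A : Matrix (ZMod n) (ZMod n) ℂ) :
    (∀ D : Matrix (ZMod n) (ZMod n) ℂ, (∃ d : ZMod n → ℂ, D = Matrix.circulant d) →
      frobNorm (Matrix.circulant (fun k : ZMod n => (n : ℂ)⁻¹ * ∑ i : ZMod n, A i (i - k)) - A)
        ≤ frobNorm (D - A)) ∧
    (∀ C : Matrix (ZMod n) (ZMod n) ℂ, (∃ c : ZMod n → ℂ, C = Matrix.circulant c) →
      (∀ D : Matrix (ZMod n) (ZMod n) ℂ, (∃ d : ZMod n → ℂ, D = Matrix.circulant d) →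
        frobNorm (C - A) ≤ frobNorm (D - A)) →
      C = Matrix.circulant (fun k : ZMod n => (n : ℂ)⁻¹ * ∑ i : ZMod n, A i (i - k))) := by
  set mvec : ZMod n → ℂ := fun k => (n : ℂ)⁻¹ * ∑ i : ZMod n, A i (i - k) with hmvec
  have hn : (n : ℂ) ≠ 0 := Nat.cast_ne_zero.mpr (NeZero.ne n)
  have hmean : ∀ k, (n : ℂ) * mvec k = ∑ i : ZMod n, A i (i - k) := by
    intro k
    rw [hmvec]
    field_simp
  -- each column sum comparison
  have hkey : ∀ (d : ZMod n → ℂ) (k : ZMod n),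
      ∑ i : ZMod n, ‖d k - A i (i - k)‖ ^ 2
        = ∑ i : ZMod n, ‖mvec k - A i (i - k)‖ ^ 2
          + n * ‖d k - mvec k‖ ^ 2 := by
    intro d k
    exact sum_sq_mean (fun i => A i (i - k)) (d k) (mvec k) (hmean k)
  have hS : ∀ d : ZMod n → ℂ,
      ∑ k : ZMod n, ∑ i : ZMod n, ‖d k - A i (i - k)‖ ^ 2
        = (∑ k : ZMod n, ∑ i : ZMod n, ‖mvec k - A i (i - k)‖ ^ 2)
          + ∑ k : ZMod n, (n : ℝ) * ‖d k - mvec k‖ ^ 2 := by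
    intro d
    rw [← Finset.sum_add_distrib]
    exact Finset.sum_congr rfl (fun k _ => hkey d k)
  have hextra_nonneg : ∀ d : ZMod n → ℂ,
      0 ≤ ∑ k : ZMod n, (n : ℝ) * ‖d k - mvec k‖ ^ 2 := by
    intro d
    apply Finset.sum_nonneg
    intro k _
    positivity
  have hle : ∀ d : ZMod n → ℂ,
      ∑ k : ZMod n, ∑ i : ZMod n, ‖mvec k - A i (i - k)‖ ^ 2
        ≤ ∑ k : ZMod n, ∑ i : ZMod n, ‖d k - A i (i - k)‖ ^ 2 := by
    intro d
    rw [hS d]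
    linarith [hextra_nonneg d]
  constructor
  · rintro D ⟨d, rfl⟩
    unfold frobNorm
    apply Real.sqrt_le_sqrt
    rw [sumsq_circ A mvec, sumsq_circ A d]
    exact hle d
  · rintro C ⟨c, rfl⟩ hmin
    have h1 : frobNorm (Matrix.circulant c - A) ≤ frobNorm (Matrix.circulant mvec - A) :=
      hmin _ ⟨mvec, rfl⟩
    have h2 : ∑ k : ZMod n, ∑ i : ZMod n, ‖c k - A i (i - k)‖ ^ 2
        ≤ ∑ k : ZMod n, ∑ i : ZMod n, ‖mvec k - A i (i - k)‖ ^ 2 := by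
      have hnn : 0 ≤ ∑ i : ZMod n, ∑ j : ZMod n,
          ‖(Matrix.circulant mvec - A) i j‖ ^ 2 := by
        apply Finset.sum_nonneg; intro i _
        apply Finset.sum_nonneg; intro j _
        positivity
      unfold frobNorm at h1
      have h1' := (Real.sqrt_le_sqrt_iff hnn).mp h1
      rwa [sumsq_circ A c, sumsq_circ A mvec] at h1'
    have hzero : ∑ k : ZMod n, (n : ℝ) * ‖c k - mvec k‖ ^ 2 = 0 := by
      have := hS c
      have h3 := hle c
      linarith [hextra_nonneg c]
    have hck : ∀ k, c k = mvec k := by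
      intro k
      have hterm : (n : ℝ) * ‖c k - mvec k‖ ^ 2 = 0 := by
        have := (Finset.sum_eq_zero_iff_of_nonneg (fun k _ => by positivity)).mp hzero k
          (Finset.mem_univ k)
        exact this
      have hnR : (n : ℝ) ≠ 0 := Nat.cast_ne_zero.mpr (NeZero.ne n)
      have habs : ‖c k - mvec k‖ = 0 := by
        have := mul_eq_zero.mp hterm
        rcases this with h | h
        · exact absurd h hnR
        · exact pow_eq_zero_iff (by norm_num) |>.mp h
      have : c k - mvec k = 0 := by
        rwa [norm_eq_zero] at habs
      exact sub_eq_zero.mp this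
    have : c = mvec := funext hck
    rw [this, hmvec]
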